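/- For all n ≥ 3, ∑_{k=0}^{n} ∑_{j=0}^{k} (binom(n−2j, k−j)·binom(j, n−k−j) + binom(n−2j−1, k−j)·binom(j, n−k−j−1) − binom(n−2j−2, k−j−2)·binom(j, n−k−j)) = 2·F(n), where F is the Fibonacci sequence. -/

import Mathlib

/-!
Exchange the two sums. For fixed `j`, each of the three sums over `k` is a Vandermonde
convolution `∑ᵢ binom(a, i) binom(j, a - i) = binom(a + j, a)`, with `a = n - 2j, n - 2j - 1,
n - 2j - 2`. Summing over `j` then leaves three diagonal sums of Pascal's triangle,
`∑ⱼ binom(m - j, j) = F(m + 1)` for `m = n, n - 1, n - 2`, and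
`F(n + 1) + F(n) - F(n - 1) = 2 F(n)`.
-/

open Finset

def binom (a b : ℤ) : ℤ := if 0 ≤ b ∧ b ≤ a then Nat.choose a.toNat b.toNat else 0

lemma binom_of_neg_right {a b : ℤ} (h : b < 0) : binom a b = 0 :=
  if_neg (by omega)

lemma binom_of_lt {a b : ℤ} (h : a < b) : binom a b = 0 :=
  if_neg (by omega)

lemma binom_of_neg_left {a b : ℤ} (h : a < 0) : binom a b = 0 :=
  if_neg (by omega)

lemma binom_natCast (a b : ℕ) : binom a b = a.choose b := by
  rcases le_or_gt b a with h | h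
  · rw [binom, if_pos ⟨Int.natCast_nonneg b, by exact_mod_cast h⟩, Int.toNat_natCast,
      Int.toNat_natCast]
  · rw [binom_of_lt (by exact_mod_cast h), Nat.choose_eq_zero_of_lt h, Nat.cast_zero]

-- No side condition: both sides vanish unless `0 ≤ b ≤ a`.
lemma binom_symm (a b : ℤ) : binom a (a - b) = binom a b := by
  unfold binom
  by_cases h : 0 ≤ b ∧ b ≤ a
  · rw [if_pos (by omega), if_pos h, show (a - b).toNat = a.toNat - b.toNat by omega,
      Nat.choose_symm (by omega)]
  · rw [if_neg (by omega), if_neg h]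

lemma sum_range_binom_mul_binom (A j R : ℕ) (h : A < R) :
    ∑ i ∈ range R, binom A i * binom j (A - i) = (A + j).choose A := by
  rw [← sum_subset (range_subset_range.2 h) fun i _ hi => by
      rw [binom_of_lt (by simp only [mem_range] at hi; omega), zero_mul],
    Nat.add_choose_eq, Nat.sum_antidiagonal_eq_sum_range_succ_mk, Nat.cast_sum]
  refine sum_congr rfl fun i hi => ?_
  rw [← Nat.cast_sub (by simp only [mem_range] at hi; omega), binom_natCast, binom_natCast,
    Nat.cast_mul]

lemma sum_range_binom_mul_binom_shift (a : ℤ) (j t R : ℕ) (h : a + t < R) :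
    ∑ k ∈ range R, binom a (k - t) * binom j (a + t - k) = binom (a + j) a := by
  rcases lt_or_ge a 0 with ha | ha
  · simp only [binom_of_neg_left ha, zero_mul, sum_const_zero, binom_of_neg_right ha]
  obtain ⟨A, rfl⟩ := Int.eq_ofNat_of_zero_le ha
  obtain ⟨R, rfl⟩ : ∃ R', R = t + R' := ⟨R - t, by omega⟩
  have head : ∑ k ∈ range t, binom A (k - t) * binom j (A + t - k) = 0 :=
    sum_eq_zero fun k hk => by
      rw [binom_of_neg_right (by simp only [mem_range] at hk; omega), zero_mul]
  rw [sum_range_add, head, zero_add, ← Nat.cast_add A j, binom_natCast,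
    ← sum_range_binom_mul_binom A j R (by omega)]
  refine sum_congr rfl fun i _ => ?_
  push_cast
  ring_nf

lemma sum_range_binom_eq_fib (m N : ℕ) (h : m < N) :
    ∑ j ∈ range N, binom ((m : ℤ) - j) ((m : ℤ) - 2 * j) = Nat.fib (m + 1) := by
  rw [← sum_subset (range_subset_range.2 h) fun j _ hj => by
      rw [binom_of_neg_right (by simp only [mem_range] at hj; omega)],
    Nat.fib_succ_eq_sum_choose, ← Nat.sum_antidiagonal_swap]
  simp only [Prod.fst_swap, Prod.snd_swap]
  rw [Nat.sum_antidiagonal_eq_sum_range_succ (fun i k => k.choose i), Nat.cast_sum]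
  refine sum_congr rfl fun j hj => ?_
  rw [← binom_natCast, Nat.cast_sub (by simp only [mem_range] at hj; omega),
    ← binom_symm ((m : ℤ) - j) j]
  ring_nf

def degreeTerm (n k j : ℕ) : ℤ :=
  binom ((n : ℤ) - 2 * j) ((k : ℤ) - j) * binom (j : ℤ) ((n : ℤ) - k - j)
    + binom ((n : ℤ) - 2 * j - 1) ((k : ℤ) - j) * binom (j : ℤ) ((n : ℤ) - k - j - 1)
    - binom ((n : ℤ) - 2 * j - 2) ((k : ℤ) - j - 2) * binom (j : ℤ) ((n : ℤ) - k - j)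

lemma degreeTerm_of_lt {n k j : ℕ} (h : k < j) : degreeTerm n k j = 0 := by
  simp only [degreeTerm, binom_of_neg_right (show (k : ℤ) - j < 0 by omega),
    binom_of_neg_right (show (k : ℤ) - j - 2 < 0 by omega), zero_mul, add_zero, sub_zero]

lemma sum_degreeTerm (n j : ℕ) :
    ∑ k ∈ range (n + 1), degreeTerm n k j
      = binom ((n : ℤ) - j) ((n : ℤ) - 2 * j) + binom ((n : ℤ) - 1 - j) ((n : ℤ) - 1 - 2 * j)
        - binom ((n : ℤ) - 2 - j) ((n : ℤ) - 2 - 2 * j) := by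
  have h₀ := sum_range_binom_mul_binom_shift ((n : ℤ) - 2 * j) j j (n + 1) (by omega)
  have h₁ := sum_range_binom_mul_binom_shift ((n : ℤ) - 2 * j - 1) j j (n + 1) (by omega)
  have h₂ := sum_range_binom_mul_binom_shift ((n : ℤ) - 2 * j - 2) j (j + 2) (n + 1) (by omega)
  simp only [degreeTerm, sum_add_distrib, sum_sub_distrib]
  push_cast at h₂
  ring_nf at h₀ h₁ h₂ ⊢
  rw [h₀, h₁, h₂]

theorem double_sum_eq_two_fib (n : ℕ) (hn : 3 ≤ n) :
    ∑ k ∈ range (n + 1), ∑ j ∈ range (k + 1),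
      (binom ((n : ℤ) - 2 * j) ((k : ℤ) - j) * binom (j : ℤ) ((n : ℤ) - k - j)
       + binom ((n : ℤ) - 2 * j - 1) ((k : ℤ) - j) * binom (j : ℤ) ((n : ℤ) - k - j - 1)
       - binom ((n : ℤ) - 2 * j - 2) ((k : ℤ) - j - 2) * binom (j : ℤ) ((n : ℤ) - k - j))
      = 2 * (Nat.fib n : ℤ) := by
  change ∑ k ∈ range (n + 1), ∑ j ∈ range (k + 1), degreeTerm n k j = _
  have extend (k : ℕ) (hk : k ∈ range (n + 1)) :
      ∑ j ∈ range (k + 1), degreeTerm n k j = ∑ j ∈ range (n + 1), degreeTerm n k j :=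
    sum_subset (range_subset_range.2 (by simpa using hk)) fun j _ hj =>
      degreeTerm_of_lt (by simpa using hj)
  rw [sum_congr rfl extend, sum_comm, sum_congr rfl fun j _ => sum_degreeTerm n j,
    sum_sub_distrib, sum_add_distrib, show (n : ℤ) - 1 = ((n - 1 : ℕ) : ℤ) by omega,
    show (n : ℤ) - 2 = ((n - 2 : ℕ) : ℤ) by omega, sum_range_binom_eq_fib n _ (by omega),
    sum_range_binom_eq_fib _ _ (by omega), sum_range_binom_eq_fib _ _ (by omega)]
  obtain ⟨m, rfl⟩ : ∃ m, n = m + 2 := ⟨n - 2, by omega⟩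
  simp only [Nat.add_sub_cancel, Nat.add_succ_sub_one, Nat.fib_add_two]
  push_cast
  ring
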